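/- arXiv:2405.20288 — 8 statements merged into one kernel-verified Lean document; each statement's English description precedes it below -/
import Mathlib

section
/- For every integer z, the integer z^4 - 4z^2 + 8 is never a perfect square. -/
theorem stmt_0 (z : ℤ) : ¬ ∃ n : ℤ, z^4 - 4*z^2 + 8 = n^2 := by
  rintro ⟨n, h⟩
  have h1 : (z^2-2)^2 + 4 = n^2 := by ring_nf; ring_nf at h; linarith
  have h2 : |z^2-2|^2 + 4 = |n|^2 := by rw [sq_abs, sq_abs]; exact h1
  have ha := abs_nonneg (z^2-2)
  have hn := abs_nonneg n
  have hlt : |z^2-2| + 1 ≤ |n| := by nlinarith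
  have hb : |z^2-2| ≤ 1 := by nlinarith
  have hab := abs_le.mp hb
  have hz1 : 1 ≤ z^2 := by linarith [hab.1]
  have hz : |z| ≤ 1 := by nlinarith [sq_abs z, abs_nonneg z]
  have hz2 : z^2 ≤ 1 := by nlinarith [sq_abs z, abs_nonneg z]
  have hzz : z^2 = 1 := le_antisymm hz2 hz1
  have h5 : n^2 = 5 := by rw [hzz] at h1; linarith
  have hn3 : n ≤ 3 ∧ -3 ≤ n := by constructor <;> nlinarith
  obtain ⟨hu, hl⟩ := hn3
  interval_cases n <;> omega
end

section
/- For every integer z, the quartic polynomial X^4 - (z^2-2)(z^4-4z^2+8)X^2 + (z^2-2)^2(z^4-4z^2+8) is irreducible over ℚ. -/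
open Polynomial

-- any rational whose square is an integer is (up to sign) an integer
lemma rat_sq_int (t : ℚ) (N : ℤ) (h : t^2 = (N:ℚ)) : ∃ n : ℤ, 0 ≤ n ∧ n^2 = N := by
  have hd : (t^2).den = 1 := by rw [h]; exact Rat.den_intCast N
  rw [Rat.den_pow] at hd
  have hd1 : t.den = 1 := by nlinarith [t.pos]
  have ht : (t.num : ℚ) = t := (Rat.den_eq_one_iff t).mp hd1
  refine ⟨|t.num|, abs_nonneg _, ?_⟩
  have hq : (t.num : ℚ)^2 = (N:ℚ) := by rw [ht]; exact h
  have h2 : t.num ^ 2 = N := by exact_mod_cast hq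
  rw [sq_abs]; exact h2

lemma not_sq1 (k n : ℤ) (hk : 1 ≤ k) (hn : 0 ≤ n) : n^2 ≠ k^2 + 4 := by
  intro h
  have h1 : k < n := by nlinarith
  have h2 : k + 1 ≤ n := h1
  have hk1 : k = 1 := by nlinarith
  subst hk1
  have h3 : n = 2 ∨ 3 ≤ n := by omega
  rcases h3 with h3 | h3 <;> nlinarith

lemma not_sq2 (k n : ℤ) (hk : 3 ≤ k) (hn : 0 ≤ n) : n^2 ≠ k^2 - 4 := by
  intro h
  have h1 : n < k := by nlinarith
  have h2 : k - 1 < n := by nlinarith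
  omega

lemma monic_deg2_eq (g : ℚ[X]) (hm : g.Monic) (hd : g.natDegree = 2) :
    g = X^2 + C (g.coeff 1) * X + C (g.coeff 0) := by
  ext n
  have hlc : g.coeff 2 = 1 := by
    have := hm.leadingCoeff
    rwa [Polynomial.leadingCoeff, hd] at this
  match n with
  | 0 => simp
  | 1 => simp
  | 2 => simp [hlc, coeff_X_pow]
  | (k+3) =>
    have h1 : g.coeff (k+3) = 0 := coeff_eq_zero_of_natDegree_lt (by omega)
    simp [h1, coeff_X_pow, coeff_X]

lemma coeffs_eq (A B b c d e : ℚ)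
    (h : (X^4 - C A * X^2 + C B : ℚ[X]) = (X^2 + C b*X + C c) * (X^2 + C d*X + C e)) :
    b + d = 0 ∧ c + e + b*d = -A ∧ b*e + c*d = 0 ∧ c*e = B := by
  have hexp : (X^2 + C b*X + C c) * (X^2 + C d*X + C e)
      = X^4 + C (b+d) * X^3 + C (c+e+b*d) * X^2 + C (b*e+c*d) * X + C (c*e) := by
    simp only [C_add, C_mul]; ring
  rw [hexp] at h
  have h3 := congrArg (fun p => Polynomial.coeff p 3) h
  have h2 := congrArg (fun p => Polynomial.coeff p 2) h
  have h1 := congrArg (fun p => Polynomial.coeff p 1) h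
  have h0 := congrArg (fun p => Polynomial.coeff p 0) h
  simp only [coeff_add, coeff_sub, coeff_C_mul, coeff_X_pow, coeff_C, coeff_X] at h3 h2 h1 h0
  norm_num at h3 h2 h1 h0
  exact ⟨h3.symm, by linarith, h1.symm, h0.symm⟩

theorem stmt_8 (z : ℤ) :
    Irreducible (X^4 - C (((z:ℚ)^2 - 2) * ((z:ℚ)^4 - 4*(z:ℚ)^2 + 8)) * X^2
      + C (((z:ℚ)^2 - 2)^2 * ((z:ℚ)^4 - 4*(z:ℚ)^2 + 8)) : ℚ[X]) := by
  -- integer avatar of m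
  set mz : ℤ := (z^2 - 2)^2 + 4 with hmz
  have hz2 : z^2 ≠ 2 := by
    intro h
    have h1 : z ≤ 1 := by nlinarith
    have h2 : -1 ≤ z := by nlinarith
    interval_cases z <;> omega
  have hw1 : 1 ≤ |z^2 - 2| := by
    have := abs_pos.mpr (sub_ne_zero.mpr hz2)
    omega
  have hmz5 : 5 ≤ mz := by
    have : 1 ≤ (z^2-2)^2 := by nlinarith [sq_abs (z^2-2)]
    omega
  -- no rational square equals mz
  have key1 : ∀ t : ℚ, t^2 ≠ (mz : ℚ) := by
    intro t h
    obtain ⟨n, hn0, hn⟩ := rat_sq_int t mz h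
    exact not_sq1 |z^2-2| n hw1 hn0 (by rw [sq_abs]; linarith [hn, hmz])
  -- no rational square equals mz*(mz-4)
  have key2 : ∀ t : ℚ, t^2 ≠ ((mz*(mz-4) : ℤ) : ℚ) := by
    intro t h
    obtain ⟨n, hn0, hn⟩ := rat_sq_int t _ h
    refine not_sq2 (mz - 2) n (by omega) hn0 ?_
    rw [hn]; ring
  set a : ℚ := (z:ℚ)^2 - 2 with hadef
  have ha : a ≠ 0 := by
    rw [hadef]
    intro h
    apply hz2
    have : ((z:ℚ))^2 = 2 := by linarith [sub_eq_zero.mp h]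
    exact_mod_cast this
  set M : ℚ := (z:ℚ)^4 - 4*(z:ℚ)^2 + 8 with hMdef
  have hMcast : M = (mz : ℚ) := by rw [hMdef, hmz]; push_cast; ring
  set A : ℚ := a * M with hA
  set B : ℚ := a^2 * M with hB
  set f : ℚ[X] := X^4 - C A * X^2 + C B with hf
  have hmon : f.Monic := by rw [hf]; monicity!
  have hdeg : f.natDegree = 4 := by rw [hf]; compute_degree!
  have hf0 : f ≠ 0 := hmon.ne_zero
  -- the crucial consequence of a root
  have root_contra : ∀ r : ℚ, f.IsRoot r → False := by
    intro r hr
    have he : r^4 - A*r^2 + B = 0 := by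
      have := hr
      simp only [hf, IsRoot, eval_add, eval_sub, eval_mul, eval_pow, eval_C, eval_X] at this
      linarith
    rw [hMcast] at hA hB
    rw [hA, hB] at he
    apply key2 ((2*r^2 - a*(mz:ℚ))/a)
    push_cast
    field_simp
    linear_combination (4:ℚ) * he
  rw [irreducible_iff]
  constructor
  · intro hu
    have := natDegree_eq_zero_of_isUnit hu
    omega
  · intro g h hgh
    by_contra hcon
    push_neg at hcon
    obtain ⟨hg, hh⟩ := hcon
    have hgne : g ≠ 0 := by rintro rfl; simp at hgh; exact hf0 hgh
    have hhne : h ≠ 0 := by rintro rfl; simp at hgh; exact hf0 hgh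
    have hsum : g.natDegree + h.natDegree = 4 := by
      rw [← natDegree_mul hgne hhne, ← hgh, hdeg]
    have hgpos : 0 < g.natDegree := by
      rcases Nat.eq_zero_or_pos g.natDegree with h1 | h1
      · exfalso; apply hg
        rw [eq_C_of_natDegree_eq_zero h1]
        refine isUnit_C.mpr (Ne.isUnit ?_)
        intro hc
        apply hgne
        rw [eq_C_of_natDegree_eq_zero h1, hc, map_zero]
      · exact h1
    have hhpos : 0 < h.natDegree := by
      rcases Nat.eq_zero_or_pos h.natDegree with h1 | h1
      · exfalso; apply hh
        rw [eq_C_of_natDegree_eq_zero h1]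
        refine isUnit_C.mpr (Ne.isUnit ?_)
        intro hc
        apply hhne
        rw [eq_C_of_natDegree_eq_zero h1, hc, map_zero]
      · exact h1
    -- a degree-one factor gives a rational root
    have lin_case : ∀ p q : ℚ[X], p ≠ 0 → f = p * q → p.natDegree = 1 → False := by
      intro p q hpne hpq hp1
      have hdp : p.degree = 1 := by
        rw [degree_eq_natDegree hpne, hp1]; rfl
      obtain ⟨x, hx⟩ := exists_root_of_degree_eq_one hdp
      apply root_contra x
      rw [hpq]
      show eval x (p * q) = 0
      rw [eval_mul, hx, zero_mul]
    have hub : g.natDegree ≤ 3 := by omega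
    interval_cases hng : g.natDegree
    · exact lin_case g h hgne hgh hng
    · -- both quadratic
      have hnh : h.natDegree = 2 := by omega
      set lg := g.leadingCoeff with hlg
      set lh := h.leadingCoeff with hlh
      have hlc : lg * lh = 1 := by
        have := hmon.leadingCoeff
        rw [hgh, leadingCoeff_mul] at this
        exact this
      have hlg0 : lg ≠ 0 := leadingCoeff_ne_zero.mpr hgne
      have hlh0 : lh ≠ 0 := leadingCoeff_ne_zero.mpr hhne
      set g1 := C lh * g with hg1
      set h1 := C lg * h with hh1
      have hg1m : g1.Monic := by
        unfold Polynomial.Monic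
        rw [hg1, leadingCoeff_mul, leadingCoeff_C]
        rw [mul_comm] at hlc
        exact hlc
      have hh1m : h1.Monic := by
        unfold Polynomial.Monic
        rw [hh1, leadingCoeff_mul, leadingCoeff_C]
        exact hlc
      have hg1d : g1.natDegree = 2 := by
        rw [hg1, natDegree_C_mul hlh0, hng]
      have hh1d : h1.natDegree = 2 := by
        rw [hh1, natDegree_C_mul hlg0, hnh]
      have hprod : f = g1 * h1 := by
        rw [hg1, hh1]
        calc f = C (lg * lh) * (g * h) := by rw [hlc, map_one, one_mul, hgh]
        _ = C lh * g * (C lg * h) := by rw [map_mul]; ring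
      set b := g1.coeff 1
      set c := g1.coeff 0
      set d := h1.coeff 1
      set e := h1.coeff 0
      have hfeq : (X^4 - C A * X^2 + C B : ℚ[X])
          = (X^2 + C b*X + C c) * (X^2 + C d*X + C e) := by
        rw [← monic_deg2_eq g1 hg1m hg1d, ← monic_deg2_eq h1 hh1m hh1d, ← hprod, hf]
      obtain ⟨e3, e2, e1, e0⟩ := coeffs_eq A B b c d e hfeq
      rw [hMcast] at hA hB
      have hd' : d = -b := by linarith
      rcases mul_eq_zero.mp (show b * (e - c) = 0 by rw [hd'] at e1; linarith [e1]) with hb | hec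
      · -- b = 0
        have e2' : c + e = -(a * (mz:ℚ)) := by rw [hA] at e2; rw [hb, hd'] at e2; linarith
        have e0' : c * e = a^2 * (mz:ℚ) := by rw [hB] at e0; exact e0
        apply key2 ((c - e)/a)
        push_cast
        field_simp
        linear_combination (c + e - a*(mz:ℚ)) * e2' - 4 * e0'
      · -- e = c
        have hec' : e = c := by linarith
        have e0' : c * c = a^2 * (mz:ℚ) := by rw [hB] at e0; rw [hec'] at e0; exact e0
        apply key1 (c/a)
        field_simp
        linear_combination e0'
    · exact lin_case h g hhne (by rw [hgh, mul_comm]) (by omega)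
end

section
/- Let r, s be integers such that r^2 - 4s is not a perfect square. Then X^4 + rX^2 + s is reducible in ℤ[X] if and only if there exists an integer c with c^2 = s and 2c - r a perfect square. -/
open Polynomial

private lemma aux_monic_deg2 (a : ℤ[X]) (ha : a.Monic) (h2 : a.natDegree = 2) :
    ∃ p q, a = X^2 + C p * X + C q := by
  refine ⟨a.coeff 1, a.coeff 0, ?_⟩
  ext n
  have hc2 : a.coeff 2 = 1 := by have := ha.coeff_natDegree; rwa [h2] at this
  match n with
  | 0 => simp [coeff_C, -eq_intCast]
  | 1 => simp [coeff_C, -eq_intCast]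
  | 2 => simp [hc2, coeff_X_pow, coeff_C, -eq_intCast]
  | (m+3) =>
    rw [a.coeff_eq_zero_of_natDegree_lt (by omega)]
    simp [coeff_X_pow, coeff_C, -eq_intCast]

private lemma aux_coeffs (r s p q u v : ℤ)
    (hf : (X^4 + C r * X^2 + C s : ℤ[X]) = (X^2 + C p * X + C q) * (X^2 + C u * X + C v)) :
    p + u = 0 ∧ q + v + p*u = r ∧ p*v + q*u = 0 ∧ q*v = s := by
  rw [show ((X^2 + C p * X + C q) * (X^2 + C u * X + C v) : ℤ[X]) =
      X^4 + C (p+u)*X^3 + C (q+v+p*u)*X^2 + C (p*v+q*u)*X + C (q*v) from by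
    simp only [C_add, C_mul]; ring] at hf
  have e3 := congrArg (fun g => coeff g 3) hf
  have e2 := congrArg (fun g => coeff g 2) hf
  have e1 := congrArg (fun g => coeff g 1) hf
  have e0 := congrArg (fun g => coeff g 0) hf
  simp [coeff_X_pow, coeff_C, coeff_C_mul, -eq_intCast, -map_add, -map_mul] at e3 e2 e1 e0
  exact ⟨e3.symm, by omega, e1.symm, e0.symm⟩

private lemma aux_root (r s t : ℤ) (hd : (X + C t : ℤ[X]) ∣ (X^4 + C r * X^2 + C s)) :
    r^2 - 4*s = (2*t^2 + r)^2 := by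
  obtain ⟨g, hg⟩ := hd
  have h0 := congrArg (eval (-t)) hg
  simp at h0
  nlinarith [h0]

theorem stmt_9 (r s : ℤ) (h : ¬ ∃ k : ℤ, r^2 - 4*s = k^2) :
    ¬ Irreducible (X^4 + C r * X^2 + C s : ℤ[X]) ↔
      ∃ c : ℤ, c^2 = s ∧ ∃ k : ℤ, 2*c - r = k^2 := by
  have hmf : (X^4 + C r * X^2 + C s : ℤ[X]).Monic := by monicity!
  have hdf : (X^4 + C r * X^2 + C s : ℤ[X]).natDegree = 4 := by compute_degree!
  constructor
  · intro hni
    have hnu : ¬ IsUnit (X^4 + C r * X^2 + C s : ℤ[X]) :=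
      not_isUnit_of_natDegree_pos _ (by omega)
    rw [irreducible_iff] at hni
    push_neg at hni
    obtain ⟨a, b, hab, hnua, hnub⟩ := hni hnu
    have hlc : a.leadingCoeff * b.leadingCoeff = 1 := by
      have hm := hmf
      rw [Monic, hab, leadingCoeff_mul] at hm; exact hm
    obtain ⟨a, b, ha, hb, hab, hnua, hnub⟩ :
        ∃ a b : ℤ[X], a.Monic ∧ b.Monic ∧
          (X^4 + C r * X^2 + C s : ℤ[X]) = a * b ∧ ¬IsUnit a ∧ ¬IsUnit b := by
      rcases Int.mul_eq_one_iff_eq_one_or_neg_one.mp hlc with ⟨h1, h2⟩ | ⟨h1, h2⟩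
      · exact ⟨a, b, h1, h2, hab, hnua, hnub⟩
      · refine ⟨-a, -b, ?_, ?_, by rw [hab]; ring, ?_, ?_⟩
        · show (-a).leadingCoeff = 1
          rw [leadingCoeff_neg, h1]; ring
        · show (-b).leadingCoeff = 1
          rw [leadingCoeff_neg, h2]; ring
        · exact fun hu => hnua (by simpa using hu.neg)
        · exact fun hu => hnub (by simpa using hu.neg)
    have hdab : a.natDegree + b.natDegree = 4 := by
      rw [← natDegree_mul ha.ne_zero hb.ne_zero, ← hab, hdf]
    have hda : 0 < a.natDegree := ha.natDegree_pos_of_not_isUnit hnua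
    have hdb : 0 < b.natDegree := hb.natDegree_pos_of_not_isUnit hnub
    have hda3 : a.natDegree ≤ 3 := by omega
    interval_cases hda' : a.natDegree
    · -- degree 1 : linear factor, root case, contradiction
      exfalso
      obtain ⟨t, ht⟩ : ∃ t, a = X + C t := ⟨_, ha.eq_X_add_C hda'⟩
      exact h ⟨2*t^2 + r, aux_root r s t ⟨b, by rw [hab, ht]⟩⟩
    · -- degree 2 : two quadratics
      have hdb' : b.natDegree = 2 := by omega
      obtain ⟨p, q, hpq⟩ := aux_monic_deg2 a ha hda'
      obtain ⟨u, v, huv⟩ := aux_monic_deg2 b hb hdb'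
      obtain ⟨e3, e2, e1, e0⟩ := aux_coeffs r s p q u v (by rw [hab, hpq, huv])
      have hu : u = -p := by omega
      subst hu
      have hpv : p * (v - q) = 0 := by linarith [e1]
      rcases mul_eq_zero.mp hpv with hp | hvq
      · exfalso
        subst hp
        exact h ⟨q - v, by linear_combination (-(r+q+v))*e2 + 4*e0⟩
      · have hv : v = q := by omega
        subst hv
        exact ⟨v, by linear_combination e0, p, by linear_combination e2⟩
    · -- degree 3 : b is linear
      exfalso
      have hdb' : b.natDegree = 1 := by omega
      obtain ⟨t, ht⟩ : ∃ t, b = X + C t := ⟨_, hb.eq_X_add_C hdb'⟩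
      exact h ⟨2*t^2 + r, aux_root r s t ⟨a, by rw [hab, ht]; ring⟩⟩
  · rintro ⟨c, hc, k, hk⟩
    intro hirr
    have hfac : (X^4 + C r * X^2 + C s : ℤ[X]) =
        (X^2 + C k * X + C c) * (X^2 + C (-k) * X + C c) := by
      have hr : r = 2*c - k^2 := by linarith
      subst hr
      subst hc
      simp only [C_sub, C_mul, C_pow, C_neg, map_ofNat]
      ring
    rcases hirr.2 hfac with hu | hu
    · refine not_isUnit_of_natDegree_pos _ ?_ hu
      have : (X^2 + C k * X + C c : ℤ[X]).natDegree = 2 := by compute_degree!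
      omega
    · refine not_isUnit_of_natDegree_pos _ ?_ hu
      have : (X^2 + C (-k) * X + C c : ℤ[X]).natDegree = 2 := by compute_degree!
      omega
end

section
/- For every integer z, the cubic resolvent of f_ψ(X) = X^4 - a·m·X^2 + a^2·m (with a = z^2-2, m = z^4-4z^2+8) factors as (X - (16 - 16z^2 + 6z^4 - z^6))·(X^2 - (4z^8 - 32z^6 + 112z^4 - 192z^2 + 128)), and this cubic has exactly one rational root, namely s = 16 - 16z^2 + 6z^4 - z^6. -/
open Polynomial

lemma no_sq (k w : ℤ) (hk : k ≠ 0) : w^2 ≠ k^2 + 4 := by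
  intro h
  have hb : 1 ≤ |k| := Int.one_le_abs hk
  have hb2 : |k|^2 = k^2 := sq_abs k
  have ha2 : |w|^2 = w^2 := sq_abs w
  have ha : 0 ≤ |w| := abs_nonneg w
  rcases le_or_gt (|k|) 1 with h1 | h1
  · have : |k| = 1 := le_antisymm h1 hb
    have h5 : |w|^2 = 5 := by rw [ha2, h]; rw [this] at hb2; nlinarith
    rcases le_or_gt (|w|) 2 with h2 | h2
    · nlinarith
    · nlinarith
  · rcases le_or_gt (|w|) (|k|) with h2 | h2
    · nlinarith
    · have : |k| + 1 ≤ |w| := h2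
      nlinarith

theorem stmt_10 (z : ℤ) :
    let b : ℚ := -(((z:ℚ)^2 - 2) * ((z:ℚ)^4 - 4*(z:ℚ)^2 + 8))
    let d : ℚ := ((z:ℚ)^2 - 2)^2 * ((z:ℚ)^4 - 4*(z:ℚ)^2 + 8)
    let s : ℚ := 16 - 16*(z:ℚ)^2 + 6*(z:ℚ)^4 - (z:ℚ)^6
    let q : ℚ := 4*(z:ℚ)^8 - 32*(z:ℚ)^6 + 112*(z:ℚ)^4 - 192*(z:ℚ)^2 + 128
    (X^3 - C b * X^2 + C (0 - 4*d) * X - C (0 - 4*b*d + 0) : ℚ[X])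
      = (X - C s) * (X^2 - C q) ∧
    (∀ x : ℚ, x^3 - b*x^2 + (0 - 4*d)*x - (0 - 4*b*d + 0) = 0 ↔ x = s) := by
  intro b d s q
  have hk : (z^2 - 2 : ℤ) ≠ 0 := by
    intro h
    have h1 : -1 ≤ z := by nlinarith
    have h2 : z ≤ 1 := by nlinarith
    interval_cases z <;> omega
  have hq : ¬ ∃ x : ℚ, x^2 = q := by
    rintro ⟨x, hx⟩
    have hqz : q = ((4*(z^2-2)^2*(z^4-4*z^2+8) : ℤ) : ℚ) := by
      simp only [q]; push_cast; ring
    have hsq : IsSquare ((4*(z^2-2)^2*(z^4-4*z^2+8) : ℤ) : ℚ) := ⟨x, by rw [← hqz, ← hx]; ring⟩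
    rw [Rat.isSquare_intCast_iff] at hsq
    obtain ⟨n, hn⟩ := hsq
    have hdvd : (2*(z^2-2)) ∣ n := by
      exact (Int.pow_dvd_pow_iff (n := 2) two_ne_zero).mp
        ⟨z^4-4*z^2+8, by linear_combination -hn⟩
    obtain ⟨w, hw⟩ := hdvd
    have hc : (2*(z^2-2))^2 * (z^4-4*z^2+8) = (2*(z^2-2))^2 * w^2 := by
      rw [hw] at hn; linear_combination hn
    have hw2 : w^2 = (z^2-2)^2 + 4 := by
      have h2 : ((2*(z^2-2))^2 : ℤ) ≠ 0 := pow_ne_zero _ (by simpa using hk)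
      have := mul_left_cancel₀ h2 hc
      linear_combination -this
    exact no_sq (z^2-2) w hk hw2
  constructor
  · simp only [b, d, s, q]
    simp only [map_sub, map_add, map_mul, map_neg, map_pow, map_ofNat, map_one, map_zero]
    ring
  · intro x
    constructor
    · intro hx
      have hfac : (x - s) * (x^2 - q) = 0 := by
        simp only [b, d, s, q] at hx ⊢; linear_combination hx
      rcases mul_eq_zero.mp hfac with h | h
      · linarith [sub_eq_zero.mp h]
      · exact absurd ⟨x, by linarith [sub_eq_zero.mp h]⟩ hq
    · intro hx
      subst hx
      simp only [b, d, s, q]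
      ring
end

section
/- The polynomial f_z(X) = X^4 - zX^3 - ((3z^6 - 16z^4 + 37z^2 - 32)/8)X^2 - ((2z^9 - 19z^7 + 72z^5 - 135z^3 + 96z)/16)X - ((3z^12 - 40z^10 + 214z^8 - 576z^6 + 719z^4 - 64z^2 - 512)/256) has all coefficients in ℤ if and only if z ≢ 2 (mod 4). -/
open Polynomial

/-- The quartic polynomial `f_z(X)` from the paper, as a polynomial over `ℚ`. -/
noncomputable def fz (z : ℤ) : ℚ[X] :=
  X^4 - C (z:ℚ) * X^3
    - C ((3*(z:ℚ)^6 - 16*(z:ℚ)^4 + 37*(z:ℚ)^2 - 32)/8) * X^2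
    - C ((2*(z:ℚ)^9 - 19*(z:ℚ)^7 + 72*(z:ℚ)^5 - 135*(z:ℚ)^3 + 96*(z:ℚ))/16) * X
    - C ((3*(z:ℚ)^12 - 40*(z:ℚ)^10 + 214*(z:ℚ)^8 - 576*(z:ℚ)^6 + 719*(z:ℚ)^4
          - 64*(z:ℚ)^2 - 512)/256)

lemma key_den (a b c d : ℤ) (n : ℕ) :
    (((X^4 - C (a:ℚ)*X^3 - C (b:ℚ)*X^2 - C (c:ℚ)*X - C (d:ℚ)).coeff n)).den = 1 := by
  have h : (X^4 - C (a:ℚ)*X^3 - C (b:ℚ)*X^2 - C (c:ℚ)*X - C (d:ℚ))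
      = Polynomial.map (Int.castRingHom ℚ) (X^4 - C a*X^3 - C b*X^2 - C c*X - C d) := by
    simp
  rw [h, coeff_map]
  exact Rat.den_intCast _

lemma fz_eq (z b c d : ℤ)
    (hb : ((b:ℚ)) = (3*(z:ℚ)^6 - 16*(z:ℚ)^4 + 37*(z:ℚ)^2 - 32)/8)
    (hc : ((c:ℚ)) = (2*(z:ℚ)^9 - 19*(z:ℚ)^7 + 72*(z:ℚ)^5 - 135*(z:ℚ)^3 + 96*(z:ℚ))/16)
    (hd : ((d:ℚ)) = (3*(z:ℚ)^12 - 40*(z:ℚ)^10 + 214*(z:ℚ)^8 - 576*(z:ℚ)^6 + 719*(z:ℚ)^4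
          - 64*(z:ℚ)^2 - 512)/256) :
    fz z = X^4 - C ((z:ℤ):ℚ)*X^3 - C ((b:ℤ):ℚ)*X^2 - C ((c:ℤ):ℚ)*X - C ((d:ℤ):ℚ) := by
  rw [fz, hb, hc, hd]

theorem stmt_12 (z : ℤ) :
    (∀ n : ℕ, ((fz z).coeff n).den = 1) ↔ ¬ z ≡ 2 [ZMOD 4] := by
  constructor
  · intro h hmod
    have hm : z % 4 = 2 := by rw [Int.ModEq] at hmod; omega
    obtain ⟨k, hk⟩ : ∃ k, z = 4*k + 2 := ⟨z / 4, by omega⟩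
    have h2 := h 2
    have hcoeff : (fz z).coeff 2
        = -((3*(z:ℚ)^6 - 16*(z:ℚ)^4 + 37*(z:ℚ)^2 - 32)/8) := by
      simp [fz, coeff_X_pow]
    rw [hcoeff] at h2
    set q : ℚ := -((3*(z:ℚ)^6 - 16*(z:ℚ)^4 + 37*(z:ℚ)^2 - 32)/8) with hq
    have hnum : (q.num : ℚ) = q := by
      conv_rhs => rw [← Rat.num_div_den q, h2]
      simp
    have h8 : ((8 * q.num : ℤ) : ℚ)
        = ((-(3*z^6 - 16*z^4 + 37*z^2 - 32) : ℤ) : ℚ) := by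
      push_cast
      rw [hnum, hq]
      ring
    have h8' : 8 * q.num = -(3*z^6 - 16*z^4 + 37*z^2 - 32) := by exact_mod_cast h8
    have hN : 3*z^6 - 16*z^4 + 37*z^2 - 32
        = 8 * (6 + 106*k + 746*k^2 + 2816*k^3 + 5248*k^4 + 4608*k^5 + 1536*k^6) + 4 := by
      subst hk; ring
    omega
  · intro hmod n
    have hm : z % 4 ≠ 2 := by
      intro h; exact hmod (by rw [Int.ModEq]; omega)
    have hcases : z % 2 = 1 ∨ z % 4 = 0 := by omega
    rcases hcases with h1 | h1
    · obtain ⟨k, hk⟩ : ∃ k, z = 2*k + 1 := ⟨z / 2, by omega⟩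
      have hz : (z:ℚ) = 2*(k:ℚ) + 1 := by rw [hk]; push_cast; ring
      rw [fz_eq z (-1 + 7*k - 7*k^2 - 4*k^3 + 58*k^4 + 72*k^5 + 24*k^6)
          (1 - 8*k - 3*k^2 + 44*k^3 - 53*k^4 - 150*k^5 + 140*k^6 + 424*k^7 + 288*k^8 + 64*k^9)
          (-1 + 5*k - 25*k^3 + 9*k^4 + 103*k^5 - 53*k^6 - 356*k^7 - 101*k^8 + 520*k^9
            + 632*k^10 + 288*k^11 + 48*k^12)
          (by push_cast [hz]; field_simp; ring)
          (by push_cast [hz]; field_simp; ring)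
          (by push_cast [hz]; field_simp; ring)]
      exact key_den _ _ _ _ n
    · obtain ⟨k, hk⟩ : ∃ k, z = 4*k := ⟨z / 4, by omega⟩
      have hz : (z:ℚ) = 4*(k:ℚ) := by rw [hk]; push_cast; ring
      rw [fz_eq z (-4 + 74*k^2 - 512*k^4 + 1536*k^6)
          (24*k - 540*k^3 + 4608*k^5 - 19456*k^7 + 32768*k^9)
          (-2 - 4*k^2 + 719*k^4 - 9216*k^6 + 54784*k^8 - 163840*k^10 + 196608*k^12)
          (by push_cast [hz]; field_simp; ring)
          (by push_cast [hz]; field_simp; ring)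
          (by push_cast [hz]; field_simp; ring)]
      exact key_den _ _ _ _ n
end

section
/- If z ≡ 2 (mod 4), then the polynomial f_z(X - 1/2) has integer coefficients, where f_z is the quartic with coefficients -z, -(3z^6-16z^4+37z^2-32)/8, -(2z^9-19z^7+72z^5-135z^3+96z)/16, -(3z^12-40z^10+214z^8-576z^6+719z^4-64z^2-512)/256. -/
open Polynomial

/-- The integer polynomial obtained from `f_{4k+2}(X - 1/2)`. -/
noncomputable def gk (k : ℤ) : ℤ[X] :=
  X^4 + C (-4 - 4*k) * X^3
    + C (-2 - 100*k - 746*k^2 - 2816*k^3 - 5248*k^4 - 4608*k^5 - 1536*k^6) * X^2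
    + C (4 + 20*k - 652*k^2 - 8612*k^3 - 50176*k^4 - 155904*k^5 - 274432*k^6
         - 275456*k^7 - 147456*k^8 - 32768*k^9) * X
    + C (-1 + 12*k + 238*k^2 - 140*k^3 - 21999*k^4 - 203008*k^5 - 924800*k^6
         - 2489856*k^7 - 4220416*k^8 - 4571136*k^9 - 3080192*k^10 - 1179648*k^11
         - 196608*k^12)

lemma key (k : ℤ) :
    (fz (4*k+2)).comp (X - C (1/2 : ℚ)) = (gk k).map (Int.castRingHom ℚ) := by
  apply Polynomial.funext
  intro x
  simp only [fz, gk, eval_comp, eval_sub, eval_add, eval_mul, eval_pow, eval_X, eval_C,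
    Polynomial.map_add, Polynomial.map_mul, Polynomial.map_pow, Polynomial.map_X, map_C,
    eq_intCast, Polynomial.map_intCast, Polynomial.eval_intCast]
  push_cast
  ring

theorem stmt_13 (z : ℤ) (hz : z ≡ 2 [ZMOD 4]) :
    ∀ n : ℕ, (((fz z).comp (X - C (1/2 : ℚ))).coeff n).den = 1 := by
  have h4 : (4:ℤ) ∣ z - 2 := Int.ModEq.dvd hz.symm
  obtain ⟨k, hk⟩ := h4
  have hz' : z = 4*k + 2 := by omega
  subst hz'
  intro n
  rw [key, coeff_map]
  simp [Rat.den_intCast]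
end

section
/- Let a be an odd integer with a > 2 and m = a^2 + 4. In the real quadratic field ℚ(√m), the identity (m - 2a + (2 - a)√m) / (2(m - a^2)) = ((a - 2 - √m)^2) / 16 holds; consequently √(a(m + 2√m)) and √(2a(m + a√m)) generate the same quartic field over ℚ. -/
open IntermediateField

theorem stmt_16 (a : ℤ) (ha_odd : Odd a) (ha : 2 < a) :
    let m : ℝ := (a : ℝ)^2 + 4
    ((m - 2*(a:ℝ) + (2 - (a:ℝ)) * Real.sqrt m) / (2 * (m - (a:ℝ)^2))
      = ((a:ℝ) - 2 - Real.sqrt m)^2 / 16) ∧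
    (ℚ⟮Real.sqrt ((a:ℝ) * (m + 2 * Real.sqrt m))⟯
      = ℚ⟮Real.sqrt (2 * (a:ℝ) * (m + (a:ℝ) * Real.sqrt m))⟯) := by
  intro m
  have ha' : (2:ℝ) < (a:ℝ) := by exact_mod_cast ha
  have ha0 : (0:ℝ) < (a:ℝ) := by linarith
  have hm : m = (a:ℝ)^2 + 4 := rfl
  have hm0 : 0 < m := by positivity
  set s : ℝ := Real.sqrt m with hs_def
  have hs2 : s^2 = m := Real.sq_sqrt hm0.le
  have hspos : 0 < s := Real.sqrt_pos.mpr hm0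
  set x : ℝ := Real.sqrt ((a:ℝ) * (m + 2 * s)) with hx_def
  set y : ℝ := Real.sqrt (2 * (a:ℝ) * (m + (a:ℝ) * s)) with hy_def
  have hxarg : 0 ≤ (a:ℝ) * (m + 2 * s) := by positivity
  have hyarg : 0 ≤ 2 * (a:ℝ) * (m + (a:ℝ) * s) := by positivity
  have hx2 : x^2 = (a:ℝ) * (m + 2 * s) := Real.sq_sqrt hxarg
  have hy2 : y^2 = 2 * (a:ℝ) * (m + (a:ℝ) * s) := Real.sq_sqrt hyarg
  have hx0 : 0 ≤ x := Real.sqrt_nonneg _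
  have hy0 : 0 ≤ y := Real.sqrt_nonneg _
  have hden : 0 < (a:ℝ) - 2 + s := by linarith
  constructor
  · rw [hm]
    have h4 : (2:ℝ) * ((a:ℝ)^2 + 4 - (a:ℝ)^2) = 8 := by ring
    field_simp
    nlinarith [hs2, hm]
  · -- key identity: y = x * (a - 2 + s) / a
    have hkey : (x * ((a:ℝ) - 2 + s) / (a:ℝ))^2 = 2 * (a:ℝ) * (m + (a:ℝ) * s) := by
      rw [div_pow, mul_pow, hx2]
      rw [div_eq_iff (by positivity : ((a:ℝ)^2) ≠ 0)]
      nlinarith [hs2, hm]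
    have hy_eq : y = x * ((a:ℝ) - 2 + s) / (a:ℝ) := by
      rw [hy_def, ← hkey, Real.sqrt_sq (by positivity)]
    have hx_eq : x = y * (a:ℝ) / ((a:ℝ) - 2 + s) := by
      rw [hy_eq]; field_simp
    -- membership lemmas
    have haK : ∀ K : IntermediateField ℚ ℝ, (a:ℝ) ∈ K := fun K => intCast_mem K a
    have h2K : ∀ K : IntermediateField ℚ ℝ, (2:ℝ) ∈ K := fun K => by
      have := intCast_mem K (2:ℤ); exact_mod_cast this
    have h4K : ∀ K : IntermediateField ℚ ℝ, (4:ℝ) ∈ K := fun K => by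
      have := intCast_mem K (4:ℤ); exact_mod_cast this
    have hmK : ∀ K : IntermediateField ℚ ℝ, m ∈ K := fun K => by
      rw [hm]; exact add_mem (pow_mem (haK K) 2) (h4K K)
    have hxX : x ∈ ℚ⟮x⟯ := mem_adjoin_simple_self ℚ x
    have hyY : y ∈ ℚ⟮y⟯ := mem_adjoin_simple_self ℚ y
    have hsX : s ∈ ℚ⟮x⟯ := by
      have hexp : s = (x^2 - (a:ℝ) * m) / (2 * (a:ℝ)) := by
        rw [hx2]; field_simp; ring
      rw [hexp]
      exact div_mem (sub_mem (pow_mem hxX 2) (mul_mem (haK _) (hmK _)))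
        (mul_mem (h2K _) (haK _))
    have hsY : s ∈ ℚ⟮y⟯ := by
      have hexp : s = (y^2 - 2 * (a:ℝ) * m) / (2 * (a:ℝ)^2) := by
        rw [hy2]; field_simp; ring
      rw [hexp]
      exact div_mem (sub_mem (pow_mem hyY 2) (mul_mem (mul_mem (h2K _) (haK _)) (hmK _)))
        (mul_mem (h2K _) (pow_mem (haK _) 2))
    apply le_antisymm
    · rw [adjoin_simple_le_iff]
      rw [hx_eq]
      exact div_mem (mul_mem hyY (haK _)) (add_mem (sub_mem (haK _) (h2K _)) hsY)
    · rw [adjoin_simple_le_iff]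
      rw [hy_eq]
      exact div_mem (mul_mem hxX (add_mem (sub_mem (haK _) (h2K _)) hsX)) (haK _)
end

section
/- For every integer z, the rational number (z^2-2)^2·(z^4-4z^2+8) is not a square in ℚ. -/
theorem stmt_19 (z : ℤ) :
    ¬ ∃ q : ℚ, (((z:ℚ)^2 - 2)^2 * ((z:ℚ)^4 - 4*(z:ℚ)^2 + 8)) = q^2 := by
  rintro ⟨q, hq⟩
  set a : ℤ := z ^ 2 - 2 with ha
  -- a ≠ 0 (2 is not a perfect square)
  have haz : a ≠ 0 := by
    intro h
    have hz2 : z ^ 2 = 2 := by omega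
    have h1 : z ≤ 1 := by nlinarith
    have h2 : -1 ≤ z := by nlinarith
    interval_cases z <;> norm_num at hz2
  -- the product is a square in ℤ
  have hsq : IsSquare (a ^ 2 * (a ^ 2 + 4)) := by
    rw [← Rat.isSquare_intCast_iff]
    refine ⟨q, ?_⟩
    push_cast [ha]
    linear_combination hq
  obtain ⟨r, hr⟩ := hsq
  have hdvd : a ∣ r := by
    rw [← Int.pow_dvd_pow_iff (two_ne_zero)]
    exact ⟨a ^ 2 + 4, by linarith [hr]⟩
  obtain ⟨k, hk⟩ := hdvd
  have hk2 : k ^ 2 = a ^ 2 + 4 := by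
    have ha2 : a ^ 2 ≠ 0 := pow_ne_zero _ haz
    have : a ^ 2 * (a ^ 2 + 4) = a ^ 2 * k ^ 2 := by rw [hr, hk]; ring
    exact (mul_left_cancel₀ ha2 this).symm
  -- now derive a contradiction in ℕ
  set b := a.natAbs with hb
  set c := k.natAbs with hc
  have hbc : c ^ 2 = b ^ 2 + 4 := by
    have h1 : (c : ℤ) ^ 2 = (b : ℤ) ^ 2 + 4 := by
      simp only [hb, hc, ← Int.natAbs_pow]
      rw [Int.natAbs_sq a, Int.natAbs_sq k] at *
      omega
    exact_mod_cast h1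
  have hb1 : 1 ≤ b := Nat.one_le_iff_ne_zero.mpr (by simpa [hb] using haz)
  have hcb : b < c := by
    by_contra h
    push_neg at h
    have := Nat.pow_le_pow_left h 2
    omega
  have hle : (b + 1) ^ 2 ≤ c ^ 2 := Nat.pow_le_pow_left hcb 2
  have hbone : b = 1 := by nlinarith
  rw [hbone] at hbc
  norm_num at hbc
  have hc3 : c ≤ 3 := by nlinarith
  interval_cases c <;> norm_num at hbc
end
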